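/- Let f : ℝ → ℝ be three times continuously differentiable on a neighborhood of a point x* with f(x*) = 0 and f'(x*) ≠ 0, and let h : ℝ → ℝ be twice continuously differentiable on a neighborhood of 0. Define the degree of logarithmic convexity L_f(x) = f(x)·f''(x)/f'(x)² and the iteration function Φ(x) = x − h(L_f(x))·f(x)/f'(x). Then Φ(x*) = x* and Φ'(x*) = 1 − h(0); in particular Φ'(x*) = 0 (second order of convergence) if and only if h(0) = 1. Moreover, if h(0) = 1, then Φ''(x*) = (1 − 2h'(0))·f''(x*)/f'(x*), so Φ''(x*) = 0 (third order of convergence) whenever in addition h'(0) = 1/2. -/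

import Mathlib

/-!
Write `Φ x = x - H x * g x` with `H = h ∘ L_f` and `g = f / f'`. Where `f' ≠ 0` one has
`g' = 1 - L_f`, and at a simple root `g(x*) = 0`, `L_f(x*) = 0`, `L_f'(x*) = f''(x*)/f'(x*)`.
Hence `Φ'(x*) = 1 - H(x*) g'(x*) = 1 - h(0)` and
`Φ''(x*) = -(2 H'(x*) g'(x*) + H(x*) g''(x*)) = (h(0) - 2 h'(0)) f''(x*)/f'(x*)`.
`H` is only `C¹`, so `(H g)''` cannot be expanded by Leibniz' rule; the term `H'' g` that would
need a second derivative of `H` is replaced by `g(x*) = 0` and the continuity of `H'`.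
-/

open Filter Topology

section Calculus

variable {𝕜 : Type*} [NontriviallyNormedField 𝕜] {F : Type*} [NormedAddCommGroup F]
  [NormedSpace 𝕜 F]

theorem HasDerivAt.continuousAt_smul_of_eq_zero {u : 𝕜 → 𝕜} {v : 𝕜 → F} {a : 𝕜} {v' : F}
    (hv : HasDerivAt v v' a) (hva : v a = 0) (hu : ContinuousAt u a) :
    HasDerivAt (fun x => u x • v x) (u a • v') a := by
  rw [hasDerivAt_iff_tendsto_slope] at hv ⊢
  have hslope : slope (fun x => u x • v x) a = fun x => u x • slope v a x := by
    funext x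
    simp only [slope_def_module, hva, smul_zero, sub_zero]
    exact smul_comm _ _ _
  rw [hslope]
  exact (hu.tendsto.mono_left nhdsWithin_le_nhds).smul hv

theorem hasDerivAt_deriv_mul_of_eq_zero {H g : 𝕜 → 𝕜} {a : 𝕜}
    (hH : ∀ᶠ x in 𝓝 a, DifferentiableAt 𝕜 H x) (hH' : ContinuousAt (deriv H) a)
    (hg : ∀ᶠ x in 𝓝 a, DifferentiableAt 𝕜 g x) (hg' : DifferentiableAt 𝕜 (deriv g) a)
    (hga : g a = 0) :
    HasDerivAt (deriv fun x => H x * g x)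
      (2 * deriv H a * deriv g a + H a * deriv (deriv g) a) a := by
  have hderiv : deriv (fun x => H x * g x) =ᶠ[𝓝 a]
      fun x => deriv H x * g x + H x * deriv g x := by
    filter_upwards [hH, hg] with x hHx hgx
    exact deriv_mul hHx hgx
  have h₁ : HasDerivAt (fun x => deriv H x * g x) (deriv H a * deriv g a) a :=
    hg.self_of_nhds.hasDerivAt.continuousAt_smul_of_eq_zero hga hH'
  have h₂ := hH.self_of_nhds.hasDerivAt.mul hg'.hasDerivAt
  exact ((h₁.add h₂).congr_of_eventuallyEq hderiv).congr_deriv (by ring)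

theorem deriv_deriv_id_sub {k : 𝕜 → 𝕜} {a : 𝕜} (hk : ∀ᶠ x in 𝓝 a, DifferentiableAt 𝕜 k x) :
    deriv (deriv fun x => x - k x) a = -deriv (deriv k) a := by
  have hderiv : deriv (fun x => x - k x) =ᶠ[𝓝 a] fun x => 1 - deriv k x := by
    filter_upwards [hk] with x hx
    exact ((hasDerivAt_id' x).sub hx.hasDerivAt).deriv
  rw [hderiv.deriv_eq, deriv_const_sub]

end Calculus

variable {𝕜 : Type*} [NontriviallyNormedField 𝕜]

noncomputable def logConvexity (f : 𝕜 → 𝕜) (x : 𝕜) : 𝕜 :=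
  f x * deriv (deriv f) x / deriv f x ^ 2

namespace logConvexity

variable {f : 𝕜 → 𝕜} {a : 𝕜}

theorem eq_zero_of_root (hroot : f a = 0) : logConvexity f a = 0 := by
  simp [logConvexity, hroot]

theorem _root_.ContDiffAt.logConvexity {n : WithTop ℕ∞} (hf : ContDiffAt 𝕜 (n + 2) f a)
    (ha : deriv f a ≠ 0) : ContDiffAt 𝕜 n (logConvexity f) a := by
  have hf' : ContDiffAt 𝕜 (n + 1) (deriv f) a :=
    hf.derivWithin (by rw [add_assoc, one_add_one_eq_two])
  have hf'' : ContDiffAt 𝕜 n (deriv (deriv f)) a := hf'.derivWithin le_rfl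
  exact ((hf.of_le le_self_add).mul hf'').div ((hf'.of_le le_self_add).pow 2) (pow_ne_zero 2 ha)

theorem hasDerivAt_of_root (hf : ContDiffAt 𝕜 3 f a) (hroot : f a = 0) (ha : deriv f a ≠ 0) :
    HasDerivAt (logConvexity f) (deriv (deriv f) a / deriv f a) a := by
  have hf' : ContDiffAt 𝕜 2 (deriv f) a := hf.derivWithin le_rfl
  have hf'' : ContDiffAt 𝕜 1 (deriv (deriv f)) a := hf'.derivWithin le_rfl
  exact (((hf.differentiableAt (by simp)).hasDerivAt.mul
      (hf''.differentiableAt one_ne_zero).hasDerivAt).div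
    ((hf'.differentiableAt (by simp)).hasDerivAt.pow 2) (pow_ne_zero 2 ha)).congr_deriv
    (by simp only [Pi.mul_apply, Pi.pow_apply, hroot]; field_simp; ring)

theorem hasDerivAt_comp_of_root {h : 𝕜 → 𝕜} (hf : ContDiffAt 𝕜 3 f a)
    (hh : DifferentiableAt 𝕜 h 0) (hroot : f a = 0) (ha : deriv f a ≠ 0) :
    HasDerivAt (fun x => h (logConvexity f x)) (deriv h 0 * (deriv (deriv f) a / deriv f a)) a :=
  hh.hasDerivAt.comp_of_eq a (hasDerivAt_of_root hf hroot ha) (eq_zero_of_root hroot).symm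

theorem hasDerivAt_div_deriv (hf : DifferentiableAt 𝕜 f a)
    (hf' : DifferentiableAt 𝕜 (deriv f) a) (ha : deriv f a ≠ 0) :
    HasDerivAt (fun x => f x / deriv f x) (1 - logConvexity f a) a :=
  (hf.hasDerivAt.div hf'.hasDerivAt ha).congr_deriv (by unfold logConvexity; field_simp)

theorem eventually_hasDerivAt_div_deriv (hf : ContDiffAt 𝕜 2 f a) (ha : deriv f a ≠ 0) :
    ∀ᶠ x in 𝓝 a, HasDerivAt (fun y => f y / deriv f y) (1 - logConvexity f x) x := by
  have hf' : ContDiffAt 𝕜 1 (deriv f) a := hf.derivWithin le_rfl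
  filter_upwards [hf.eventually (by simp), hf'.continuousAt.eventually_ne ha] with x hx hx'
  exact hasDerivAt_div_deriv (hx.differentiableAt (by simp))
    ((hx.derivWithin (m := 1) le_rfl).differentiableAt one_ne_zero) hx'

theorem hasDerivAt_deriv_div_deriv_of_root (hf : ContDiffAt 𝕜 3 f a) (hroot : f a = 0)
    (ha : deriv f a ≠ 0) :
    HasDerivAt (deriv fun y => f y / deriv f y) (-(deriv (deriv f) a / deriv f a)) a := by
  have hderiv : deriv (fun y => f y / deriv f y) =ᶠ[𝓝 a] fun x => 1 - logConvexity f x :=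
    (eventually_hasDerivAt_div_deriv (hf.of_le (by norm_num)) ha).mono fun x hx => hx.deriv
  exact (((hasDerivAt_const a 1).sub (hasDerivAt_of_root hf hroot ha)).congr_of_eventuallyEq
    hderiv).congr_deriv (zero_sub _)

end logConvexity

noncomputable def iterationFun (h f : 𝕜 → 𝕜) (x : 𝕜) : 𝕜 :=
  x - h (logConvexity f x) * (f x / deriv f x)

namespace iterationFun

variable {h f : 𝕜 → 𝕜} {a : 𝕜}

theorem apply_of_root (hroot : f a = 0) : iterationFun h f a = a := by
  simp [iterationFun, hroot]

theorem deriv_of_root (hf : ContDiffAt 𝕜 2 f a) (hh : ContinuousAt h 0) (hroot : f a = 0)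
    (ha : deriv f a ≠ 0) : deriv (iterationFun h f) a = 1 - h 0 := by
  have hL0 := logConvexity.eq_zero_of_root (f := f) hroot
  have hH : ContinuousAt (fun x => h (logConvexity f x)) a :=
    hh.comp_of_eq (hf.logConvexity (n := 0) ha).continuousAt hL0
  have hg := logConvexity.hasDerivAt_div_deriv (hf.differentiableAt (by simp))
    ((hf.derivWithin (m := 1) le_rfl).differentiableAt one_ne_zero) ha
  have hk := hg.continuousAt_smul_of_eq_zero (by simp [hroot]) hH
  rw [hL0, sub_zero, smul_eq_mul, mul_one] at hk
  exact ((hasDerivAt_id' a).sub hk).deriv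

theorem deriv_deriv_of_root (hf : ContDiffAt 𝕜 3 f a) (hh : ContDiffAt 𝕜 1 h 0)
    (hroot : f a = 0) (ha : deriv f a ≠ 0) :
    deriv (deriv (iterationFun h f)) a =
      (h 0 - 2 * deriv h 0) * deriv (deriv f) a / deriv f a := by
  set H := fun x => h (logConvexity f x)
  set g := fun x => f x / deriv f x
  have hL0 := logConvexity.eq_zero_of_root (f := f) hroot
  have hHa : H a = h 0 := by simp only [H, hL0]
  have hH : ContDiffAt 𝕜 1 H a := by
    rw [← hL0] at hh
    exact hh.comp a (hf.logConvexity (n := 1) ha)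
  have hH_diff : ∀ᶠ x in 𝓝 a, DifferentiableAt 𝕜 H x :=
    (hH.eventually (by simp)).mono fun x hx => hx.differentiableAt one_ne_zero
  have hH' : deriv H a = deriv h 0 * (deriv (deriv f) a / deriv f a) :=
    (logConvexity.hasDerivAt_comp_of_root hf (hh.differentiableAt one_ne_zero) hroot ha).deriv
  have hg := logConvexity.eventually_hasDerivAt_div_deriv (hf.of_le (by norm_num)) ha
  have hg_diff : ∀ᶠ x in 𝓝 a, DifferentiableAt 𝕜 g x := hg.mono fun x hx => hx.differentiableAt
  have hg' : deriv g a = 1 := by rw [hg.self_of_nhds.deriv, hL0, sub_zero]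
  have hg'' := logConvexity.hasDerivAt_deriv_div_deriv_of_root hf hroot ha
  have hk := hasDerivAt_deriv_mul_of_eq_zero hH_diff
    (hH.derivWithin (m := 0) (by simp)).continuousAt hg_diff hg''.differentiableAt
    (by simp [g, hroot])
  have hk_diff : ∀ᶠ x in 𝓝 a, DifferentiableAt 𝕜 (fun y => H y * g y) x := by
    filter_upwards [hH_diff, hg_diff] with x hHx hgx
    exact hHx.mul hgx
  change deriv (deriv fun x => x - H x * g x) a = _
  rw [deriv_deriv_id_sub hk_diff, hk.deriv, hg', hg''.deriv, hH', hHa]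
  field_simp
  ring

end iterationFun

/-- **Characterization of second and third order one-point iterations.**
Let `f : ℝ → ℝ` be three times continuously differentiable near a point `x*` with
`f(x*) = 0` and `f'(x*) ≠ 0`, and let `h : ℝ → ℝ` be twice continuously differentiable
near `0`.  With the degree of logarithmic convexity `L_f(x) = f(x)f''(x)/f'(x)²` and
the iteration function `Φ(x) = x − h(L_f(x))·f(x)/f'(x)`, one has `Φ(x*) = x*` and
`Φ'(x*) = 1 − h(0)`; in particular `Φ'(x*) = 0` iff `h(0) = 1`.  Moreover, if `h(0) = 1`
then `Φ''(x*) = (1 − 2h'(0))·f''(x*)/f'(x*)`, so `Φ''(x*) = 0` whenever in addition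
`h'(0) = 1/2`. -/
theorem stmt_18 (f h : ℝ → ℝ) (xs : ℝ)
    (hf : ContDiffAt ℝ 3 f xs) (hh : ContDiffAt ℝ 2 h 0)
    (hroot : f xs = 0) (hsimple : deriv f xs ≠ 0)
    (L Φ : ℝ → ℝ)
    (hL : L = fun x => f x * deriv (deriv f) x / (deriv f x) ^ 2)
    (hΦ : Φ = fun x => x - h (L x) * f x / deriv f x) :
    Φ xs = xs ∧
    deriv Φ xs = 1 - h 0 ∧
    (deriv Φ xs = 0 ↔ h 0 = 1) ∧
    (h 0 = 1 →
      deriv (deriv Φ) xs = (1 - 2 * deriv h 0) * deriv (deriv f) xs / deriv f xs ∧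
      (deriv h 0 = 1 / 2 → deriv (deriv Φ) xs = 0)) := by
  have hΦ_eq : Φ = iterationFun h f := by
    subst hΦ hL
    funext x
    exact sub_right_inj.mpr (mul_div_assoc _ _ _)
  subst hΦ_eq
  have hd1 := iterationFun.deriv_of_root (hf.of_le (by norm_num)) hh.continuousAt hroot hsimple
  have hd2 := iterationFun.deriv_deriv_of_root hf (hh.of_le one_le_two) hroot hsimple
  refine ⟨iterationFun.apply_of_root hroot, hd1, ?_, fun h0 => ?_⟩
  · rw [hd1, sub_eq_zero, eq_comm]
  · rw [hd2, h0]
    exact ⟨rfl, fun h1 => by rw [h1]; ring⟩
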